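/- arXiv:2605.13687 — 2 statements merged into one kernel-verified Lean document; each statement's English description precedes it below -/
import Mathlib

section
/- For the Ising broadcast process on T(d,h) with fixed d ≥ 2 and ρ ∈ (0,1) satisfying dρ² > 1, the third moment satisfies M_{d,ρ,h}(3)/((dρ)^{3h}) → C_{d,ρ}(3) as h → ∞, where C_{d,ρ}(3) := (1/((dρ)² − 1))·(3·((d−1)²/d)·(dρ²/(dρ² − 1)) + (dρ)²·(1 − 1/d)(1 − 2/d)). -/
open Finset

noncomputable section

/-- A configuration of the rooted `d`-ary tree of height `h` with values in `S`:
a vertex at level `ℓ ≤ h` is a path from the root, i.e. a function `Fin ℓ → Fin d`,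
and the configuration assigns an element of `S` to every vertex. -/
abbrev TreeConfig (d h : ℕ) (S : Type) := ∀ ℓ : Fin (h + 1), (Fin ℓ.val → Fin d) → S

/-- The value at the root of the tree. -/
def rootOf {d h : ℕ} {S : Type} (σ : TreeConfig d h S) : S :=
  σ ⟨0, Nat.succ_pos h⟩ Fin.elim0

/-- The values at the leaves (level `h`) of the tree, read as a function on root-to-leaf paths. -/
def leavesOf {d h : ℕ} {S : Type} (σ : TreeConfig d h S) : (Fin h → Fin d) → S :=
  σ ⟨h, Nat.lt_succ_self h⟩

/-- Product over all edges of the tree of an edge weight `W (parent value) (child value)`. -/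
def edgeProd {S : Type} (d h : ℕ) (W : S → S → ℝ) (σ : TreeConfig d h S) : ℝ :=
  ∏ ℓ : Fin h, ∏ f : Fin (ℓ.val + 1) → Fin d,
    W (σ ⟨ℓ.val, Nat.lt_succ_of_lt ℓ.isLt⟩ fun i => f i.castSucc)
      (σ ⟨ℓ.val + 1, Nat.succ_lt_succ ℓ.isLt⟩ f)

/-- Probability of a full configuration under the broadcast process with root prior `ν`
and broadcast channel `W`. -/
def broadcastW {S : Type} (d h : ℕ) (ν : S → ℝ) (W : S → S → ℝ) (σ : TreeConfig d h S) : ℝ :=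
  ν (rootOf σ) * edgeProd d h W σ

/-- The real spin value `±1` of a Boolean spin. -/
def spinVal (b : Bool) : ℝ := if b then 1 else -1

/-- The Ising broadcast channel: copy the parent spin with probability `(1+ρ)/2`. -/
def isingEdge (ρ : ℝ) (a b : Bool) : ℝ := if a = b then (1 + ρ) / 2 else (1 - ρ) / 2

/-- Probability of a configuration under the Ising broadcast process with uniform root. -/
def isingW (d h : ℕ) (ρ : ℝ) (σ : TreeConfig d h Bool) : ℝ :=
  broadcastW d h (fun _ => (1 : ℝ) / 2) (isingEdge ρ) σ

/-- Probability of a configuration under the Ising broadcast process with the root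
conditioned to equal `r`. -/
def isingWRooted (d h : ℕ) (ρ : ℝ) (r : Bool) (σ : TreeConfig d h Bool) : ℝ :=
  (if rootOf σ = r then 1 else 0) * edgeProd d h (isingEdge ρ) σ

/-- The sum of the `d^h` leaf spins of a configuration. -/
def leafSum (d h : ℕ) (σ : TreeConfig d h Bool) : ℝ :=
  ∑ f : Fin h → Fin d, spinVal (leavesOf σ f)

/-- Expectation of a function of the configuration under the Ising broadcast process. -/
def isingExp (d h : ℕ) (ρ : ℝ) (g : TreeConfig d h Bool → ℝ) : ℝ :=
  ∑ σ : TreeConfig d h Bool, isingW d h ρ σ * g σ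

/-- `M_{d,ρ,h}(k) = E[(Σ_ℓ X_ℓ)^k | X_root = +1]`. -/
def isingMoment (d h : ℕ) (ρ : ℝ) (k : ℕ) : ℝ :=
  ∑ σ : TreeConfig d h Bool, isingWRooted d h ρ true σ * leafSum d h σ ^ k

/-- Variance of the sum of the leaf spins under the (true) Ising broadcast process. -/
def isingVar (d h : ℕ) (ρ : ℝ) : ℝ :=
  isingExp d h ρ (fun σ => leafSum d h σ ^ 2) - isingExp d h ρ (leafSum d h) ^ 2

/-- Marginal probability of a leaf spin assignment under the Ising broadcast process. -/
def leafW (d w : ℕ) (ρ : ℝ) (y : (Fin w → Fin d) → Bool) : ℝ :=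
  ∑ σ : TreeConfig d w Bool, if leavesOf σ = y then isingW d w ρ σ else 0

/-- Marginal probability of a leaf spin assignment given the root equals `r`. -/
def leafWRooted (d w : ℕ) (ρ : ℝ) (r : Bool) (y : (Fin w → Fin d) → Bool) : ℝ :=
  ∑ σ : TreeConfig d w Bool, if leavesOf σ = y then isingWRooted d w ρ r σ else 0

/-- Posterior mean `E[X_root | X_leaves = y]` of the root spin given the leaves. -/
def rootPostMean (d w : ℕ) (ρ : ℝ) (y : (Fin w → Fin d) → Bool) : ℝ :=
  (∑ σ : TreeConfig d w Bool,
      if leavesOf σ = y then isingW d w ρ σ * spinVal (rootOf σ) else 0) / leafW d w ρ y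

/-- `q_w = E[E[X_root | X_leaves]^2]` for the Ising broadcast process on `T(d,w)`. -/
def qIsing (d w : ℕ) (ρ : ℝ) : ℝ :=
  ∑ y : (Fin w → Fin d) → Bool, leafW d w ρ y * rootPostMean d w ρ y ^ 2

/-- The law `D_m` of the height of the least common ancestor of a uniformly random
adjacent pair of depth-`w` subtrees: `P(D_m = s) = (d-1) d^{m-s} / (d^m - 1)` for `1 ≤ s ≤ m`. -/
def lcaLaw (d m : ℕ) (s : ℕ) : ℝ :=
  if 1 ≤ s ∧ s ≤ m then ((d : ℝ) - 1) * (d : ℝ) ^ (m - s) / ((d : ℝ) ^ m - 1) else 0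

/-- `α = E_{s ∼ D_m}[ρ^{2s}]`. -/
def alphaAR (d m : ℕ) (ρ : ℝ) : ℝ := ∑ s ∈ Finset.Icc 1 m, lcaLaw d m s * ρ ^ (2 * s)

/-- Joint law of the two subtree root spins when their least common ancestor is at
height `s` above them: a pair of uniform `±1` spins with correlation `ρ^{2s}`. -/
def pairRootW (ρ : ℝ) (s : ℕ) (r r' : Bool) : ℝ :=
  (1 + spinVal r * spinVal r' * ρ ^ (2 * s)) / 4

/-- One-step transition of the autoregressive Ising broadcast process: the conditional law
of the next block of `d^w` leaves given that the previous block equals `y`, averaged over a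
least common ancestor height `s ∼ D_m`. -/
def arStep (d w m : ℕ) (ρ : ℝ) (y y' : (Fin w → Fin d) → Bool) : ℝ :=
  ∑ s ∈ Finset.Icc 1 m, lcaLaw d m s *
    ((∑ r : Bool, ∑ r' : Bool,
        pairRootW ρ s r r' * leafWRooted d w ρ r y * leafWRooted d w ρ r' y') / leafW d w ρ y)

/-- Joint probability of the blocks `Y 0, …, Y (n-1)` of the autoregressive Ising
broadcast process with context depth `w`. -/
def arWeight (d w m n : ℕ) (ρ : ℝ) (Y : Fin n → ((Fin w → Fin d) → Bool)) : ℝ :=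
  (if hn : 0 < n then leafW d w ρ (Y ⟨0, hn⟩) else 1) *
    ∏ i : Fin (n - 1),
      arStep d w m ρ (Y ⟨i.val, by have := i.isLt; omega⟩)
        (Y ⟨i.val + 1, by have := i.isLt; omega⟩)

/-- Expectation of a function of the blocks under the autoregressive Ising broadcast process. -/
def arExp (d w m n : ℕ) (ρ : ℝ) (g : (Fin n → ((Fin w → Fin d) → Bool)) → ℝ) : ℝ :=
  ∑ Y : Fin n → ((Fin w → Fin d) → Bool), arWeight d w m n ρ Y * g Y

/-- The block sum `Z_i = Σ_ℓ (Y_i)_ℓ`. -/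
def blockSum (d w : ℕ) (y : (Fin w → Fin d) → Bool) : ℝ :=
  ∑ f : Fin w → Fin d, spinVal (y f)

/-- The total sum `Σ_i Z_i` of all `d^h` generated spins. -/
def arTotal (d w n : ℕ) (Y : Fin n → ((Fin w → Fin d) → Bool)) : ℝ :=
  ∑ i : Fin n, blockSum d w (Y i)

/-- Variance of the total sum of spins generated by the autoregressive Ising broadcast
process with context depth `w` on `T(d,h)`. -/
def arVar (d h w : ℕ) (ρ : ℝ) : ℝ :=
  arExp d w (h - w) (d ^ (h - w)) ρ (fun Y => arTotal d w (d ^ (h - w)) Y ^ 2)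
    - arExp d w (h - w) (d ^ (h - w)) ρ (arTotal d w (d ^ (h - w))) ^ 2

/-- Second moment of the total sum of spins of the autoregressive process. -/
def arSecond (d h w : ℕ) (ρ : ℝ) : ℝ :=
  arExp d w (h - w) (d ^ (h - w)) ρ (fun Y => arTotal d w (d ^ (h - w)) Y ^ 2)

/-- Fourth moment of the total sum of spins of the autoregressive process. -/
def arFourth (d h w : ℕ) (ρ : ℝ) : ℝ :=
  arExp d w (h - w) (d ^ (h - w)) ρ (fun Y => arTotal d w (d ^ (h - w)) Y ^ 4)

/-- `C_{d,ρ}(2) = (1 - 1/d)·dρ²/(dρ² - 1)`. -/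
def C2const (d : ℕ) (ρ : ℝ) : ℝ := (1 - 1 / (d : ℝ)) * ((d : ℝ) * ρ ^ 2) / ((d : ℝ) * ρ ^ 2 - 1)

/-- `α* = Σ_{s ≥ 1} (1 - 1/d)(1/d)^{s-1} ρ^{2s}`. -/
def alphaStar (d : ℕ) (ρ : ℝ) : ℝ :=
  ∑' s : ℕ, (1 - 1 / (d : ℝ)) * (1 / (d : ℝ)) ^ s * ρ ^ (2 * (s + 1))

/-- `A_{d,ρ}(2) = C_{d,ρ}(2) + 2α*/(1 - α* q*)`. -/
def A2const (d : ℕ) (ρ : ℝ) (qstar : ℝ) : ℝ :=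
  C2const d ρ + 2 * alphaStar d ρ / (1 - alphaStar d ρ * qstar)

end

/-- `C_{d,ρ}(3)`. -/
noncomputable def C3const (d : ℕ) (ρ : ℝ) : ℝ :=
  (1 / (((d : ℝ) * ρ) ^ 2 - 1)) *
    (3 * (((d : ℝ) - 1) ^ 2 / (d : ℝ)) * ((d : ℝ) * ρ ^ 2 / ((d : ℝ) * ρ ^ 2 - 1)) +
      ((d : ℝ) * ρ) ^ 2 * (1 - 1 / (d : ℝ)) * (1 - 2 / (d : ℝ)))


/-!
Conditionally on the root spin `r`, the leaf sum of `T(d, h+1)` is the sum of the leaf sums of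
`d` independent subtrees of height `h`, each rooted at a copy of `r` flipped with probability
`(1-ρ)/2`; flipping all spins shows that the `k`-th moment given root `-` is `(-1)^k` times the
one given root `+`. Hence the first three conditional moments `G₁, G₂, G₃` satisfy triangular
linear recursions in `h`, which solve (with `u = dρ` and `K = (d-1)ρ²/(dρ²-1)`) to
`G₁ = uʰ`, `G₂ = (1-K) dʰ + K u²ʰ` and `G₃ = A uʰ + 3(1-K) (d²ρ)ʰ + C_{d,ρ}(3) u³ʰ`, with `A`
fixed by `G₃ = 1` at `h = 0`.
Since `u² > 1` and `dρ² > 1`, the first two terms of `G₃` are `o(u³ʰ)`.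
-/

namespace TreeConfig

variable {d h : ℕ} {S : Type}

def glue (r : S) (τ : Fin d → TreeConfig d h S) : TreeConfig d (h + 1) S
  | ⟨0, _⟩ => fun _ => r
  | ⟨ℓ + 1, hl⟩ => fun f => τ (f 0) ⟨ℓ, by omega⟩ (Fin.tail f)

variable (d h S) in
def succEquiv : TreeConfig d (h + 1) S ≃ S × (Fin d → TreeConfig d h S) where
  toFun σ := (rootOf σ, fun c ℓ f => σ ⟨ℓ.val + 1, by omega⟩ (Fin.cons c f))
  invFun p := glue p.1 p.2
  left_inv σ := by
    funext ℓ f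
    match ℓ with
    | ⟨0, hl⟩ => exact congrArg (σ ⟨0, hl⟩) (funext fun i => i.elim0)
    | ⟨ℓ' + 1, hl⟩ =>
      show σ ⟨ℓ' + 1, hl⟩ (Fin.cons (f 0) (Fin.tail f)) = σ ⟨ℓ' + 1, hl⟩ f
      rw [Fin.cons_self_tail]
  right_inv p := by
    refine Prod.ext rfl ?_
    funext c ℓ f
    simp only [glue, Fin.cons_zero, Fin.tail_cons]

variable (d S) in
@[simps]
def zeroEquiv : TreeConfig d 0 S ≃ S where
  toFun := rootOf
  invFun s := fun _ _ => s
  left_inv σ := by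
    funext ℓ f
    match ℓ with
    | ⟨0, hl⟩ => exact congrArg (σ ⟨0, hl⟩) (funext fun i => i.elim0)
  right_inv _ := rfl

@[simp]
lemma rootOf_glue (r : S) (τ : Fin d → TreeConfig d h S) : rootOf (glue r τ) = r := rfl

lemma edgeProd_glue (W : S → S → ℝ) (r : S) (τ : Fin d → TreeConfig d h S) :
    edgeProd d (h + 1) W (glue r τ) = ∏ c, W r (rootOf (τ c)) * edgeProd d h W (τ c) := by
  have castSucc_cons : ∀ {m : ℕ} (c : Fin d) (f : Fin (m + 1) → Fin d),
      (fun i : Fin (m + 1) => Fin.cons (α := fun _ => Fin d) c f i.castSucc) =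
        Fin.cons c fun i => f i.castSucc := by
    intro m c f
    funext i
    induction i using Fin.cases with
    | zero => simp
    | succ j => rw [← Fin.succ_castSucc]; simp
  rw [prod_mul_distrib, edgeProd, Fin.prod_univ_succ]
  congr 1
  · refine Fintype.prod_equiv (Equiv.funUnique (Fin 1) (Fin d)) _ _ fun f => ?_
    simp only [glue]
    exact congrArg (W r) (congrArg _ (funext fun i => i.elim0))
  · refine (prod_congr rfl fun ℓ _ => ?_).trans prod_comm
    rw [← (Fin.consEquiv fun _ => Fin d).prod_comp, Fintype.prod_prod_type]
    refine prod_congr rfl fun c _ => prod_congr rfl fun f _ => ?_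
    simp only [Fin.consEquiv_apply]
    erw [castSucc_cons]
    simp [glue, Fin.consEquiv, Fin.tail_cons]

lemma leafSum_glue (r : Bool) (τ : Fin d → TreeConfig d h Bool) :
    leafSum d (h + 1) (glue r τ) = ∑ c, leafSum d h (τ c) := by
  rw [leafSum, ← (Fin.consEquiv fun _ => Fin d).sum_comp, Fintype.sum_prod_type]
  simp [leafSum, leavesOf, glue, Fin.consEquiv]

def neg (σ : TreeConfig d h Bool) : TreeConfig d h Bool := fun ℓ f => !σ ℓ f

variable (d h) in
def negEquiv : TreeConfig d h Bool ≃ TreeConfig d h Bool where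
  toFun := neg
  invFun := neg
  left_inv σ := by funext ℓ f; simp [neg]
  right_inv σ := by funext ℓ f; simp [neg]

lemma edgeProd_isingEdge_neg (ρ : ℝ) (σ : TreeConfig d h Bool) :
    edgeProd d h (isingEdge ρ) (neg σ) = edgeProd d h (isingEdge ρ) σ := by
  have isingEdge_not : ∀ a b : Bool, isingEdge ρ (!a) (!b) = isingEdge ρ a b := by
    intro a b; cases a <;> cases b <;> simp [isingEdge]
  simp only [edgeProd, neg, isingEdge_not]

lemma leafSum_neg (σ : TreeConfig d h Bool) : leafSum d h (neg σ) = -leafSum d h σ := by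
  have spinVal_not : ∀ b : Bool, spinVal (!b) = -spinVal b := by
    intro b; cases b <;> simp [spinVal]
  simp only [leafSum, leavesOf, neg, spinVal_not, sum_neg_distrib]

end TreeConfig

section IidSum

variable {T : Type} [Fintype T] (μ Z : T → ℝ)

def iidSumMoment (n k : ℕ) : ℝ :=
  ∑ τ : Fin n → T, (∏ c, μ (τ c)) * (∑ c, Z (τ c)) ^ k

def weightedMoment (k : ℕ) : ℝ := ∑ t, μ t * Z t ^ k

lemma iidSumMoment_zero_left (k : ℕ) : iidSumMoment μ Z 0 k = 0 ^ k := by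
  simp [iidSumMoment]

lemma iidSumMoment_succ (n k : ℕ) :
    iidSumMoment μ Z (n + 1) k = ∑ j ∈ range (k + 1),
      (k.choose j : ℝ) * weightedMoment μ Z j * iidSumMoment μ Z n (k - j) := by
  have expand : ∀ (t : T) (τ : Fin n → T),
      (μ t * ∏ c, μ (τ c)) * (Z t + ∑ c, Z (τ c)) ^ k =
        ∑ j ∈ range (k + 1), (k.choose j : ℝ) *
          ((μ t * Z t ^ j) * ((∏ c, μ (τ c)) * (∑ c, Z (τ c)) ^ (k - j))) := by
    intro t τ
    rw [add_pow, mul_sum]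
    exact sum_congr rfl fun j _ => by ring
  calc iidSumMoment μ Z (n + 1) k
      = ∑ t, ∑ τ : Fin n → T, (μ t * ∏ c, μ (τ c)) * (Z t + ∑ c, Z (τ c)) ^ k := by
        rw [iidSumMoment, ← (Fin.consEquiv fun _ => T).sum_comp, Fintype.sum_prod_type]
        simp [Fin.prod_univ_succ, Fin.sum_univ_succ]
    _ = ∑ j ∈ range (k + 1), ∑ t, ∑ τ : Fin n → T, (k.choose j : ℝ) *
          ((μ t * Z t ^ j) * ((∏ c, μ (τ c)) * (∑ c, Z (τ c)) ^ (k - j))) := by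
        simp_rw [expand]
        exact (sum_congr rfl fun t _ => sum_comm).trans sum_comm
    _ = _ := by
        refine sum_congr rfl fun j _ => ?_
        rw [weightedMoment, iidSumMoment, mul_assoc, sum_mul_sum, mul_sum]
        exact sum_congr rfl fun t _ => by rw [mul_sum]

variable {μ} (hμ : ∑ t, μ t = 1)
include hμ

lemma iidSumMoment_zero_right (n : ℕ) : iidSumMoment μ Z n 0 = 1 := by
  induction n with
  | zero => simp [iidSumMoment_zero_left]
  | succ n ih => simp [iidSumMoment_succ, weightedMoment, hμ, ih]

lemma iidSumMoment_one (n : ℕ) : iidSumMoment μ Z n 1 = n * weightedMoment μ Z 1 := by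
  induction n with
  | zero => simp [iidSumMoment_zero_left]
  | succ n ih =>
    simp [iidSumMoment_succ, sum_range_succ, weightedMoment, hμ, ih,
      iidSumMoment_zero_right Z hμ]
    ring

lemma iidSumMoment_two (n : ℕ) :
    iidSumMoment μ Z n 2 =
      n * weightedMoment μ Z 2 + n * (n - 1) * weightedMoment μ Z 1 ^ 2 := by
  induction n with
  | zero => simp [iidSumMoment_zero_left]
  | succ n ih =>
    simp [iidSumMoment_succ, sum_range_succ, weightedMoment, hμ, ih,
      iidSumMoment_zero_right Z hμ, iidSumMoment_one Z hμ]
    ring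

lemma iidSumMoment_three (n : ℕ) :
    iidSumMoment μ Z n 3 = n * weightedMoment μ Z 3
      + 3 * (n * (n - 1)) * weightedMoment μ Z 2 * weightedMoment μ Z 1
      + n * (n - 1) * (n - 2) * weightedMoment μ Z 1 ^ 3 := by
  induction n with
  | zero => simp [iidSumMoment_zero_left]
  | succ n ih =>
    simp [iidSumMoment_succ, sum_range_succ, weightedMoment, hμ, ih,
      iidSumMoment_zero_right Z hμ, iidSumMoment_one Z hμ, iidSumMoment_two Z hμ, Nat.choose]
    ring

end IidSum

section IsingMoments

variable (d h : ℕ) (ρ : ℝ)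

noncomputable def isingCondMoment (r : Bool) (k : ℕ) : ℝ :=
  ∑ σ : TreeConfig d h Bool, isingWRooted d h ρ r σ * leafSum d h σ ^ k

/-- The weight of a child subtree whose parent has spin `r`. -/
noncomputable def childSubtreeW (r : Bool) (σ : TreeConfig d h Bool) : ℝ :=
  isingEdge ρ r (rootOf σ) * edgeProd d h (isingEdge ρ) σ

variable {d h ρ}

lemma isingCondMoment_height_zero (r : Bool) (k : ℕ) :
    isingCondMoment d 0 ρ r k = spinVal r ^ k := by
  rw [isingCondMoment, ← (TreeConfig.zeroEquiv d Bool).symm.sum_comp, Fintype.sum_bool]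
  cases r <;> simp [isingWRooted, rootOf, edgeProd, leafSum, leavesOf]

lemma isingCondMoment_height_succ (r : Bool) (k : ℕ) :
    isingCondMoment (d := d) (h + 1) ρ r k =
      iidSumMoment (childSubtreeW d h ρ r) (leafSum d h) d k := by
  rw [isingCondMoment, ← (TreeConfig.succEquiv d h Bool).symm.sum_comp, Fintype.sum_prod_type,
    Fintype.sum_bool]
  cases r <;>
    simp [TreeConfig.succEquiv, isingWRooted, TreeConfig.edgeProd_glue, TreeConfig.leafSum_glue,
      iidSumMoment, childSubtreeW]

lemma isingCondMoment_false (k : ℕ) :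
    isingCondMoment d h ρ false k = (-1) ^ k * isingCondMoment d h ρ true k := by
  rw [isingCondMoment, ← (TreeConfig.negEquiv d h).sum_comp, isingCondMoment, mul_sum]
  refine sum_congr rfl fun σ _ => ?_
  have root_neg : rootOf (TreeConfig.neg σ) = !rootOf σ := rfl
  simp only [TreeConfig.negEquiv, Equiv.coe_fn_mk, isingWRooted, root_neg,
    TreeConfig.edgeProd_isingEdge_neg, TreeConfig.leafSum_neg]
  rw [neg_pow]
  cases rootOf σ <;> simp [mul_left_comm]

lemma weightedMoment_childSubtreeW (r : Bool) (k : ℕ) :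
    weightedMoment (childSubtreeW d h ρ r) (leafSum d h) k =
      ∑ r', isingEdge ρ r r' * isingCondMoment d h ρ r' k := by
  simp only [weightedMoment, isingCondMoment, isingWRooted, childSubtreeW, mul_sum]
  rw [sum_comm]
  refine sum_congr rfl fun σ _ => ?_
  rw [Fintype.sum_bool]
  cases rootOf σ <;> simp <;> ring

lemma sum_childSubtreeW (r : Bool) (hmass : ∀ r', isingCondMoment d h ρ r' 0 = 1) :
    ∑ σ, childSubtreeW d h ρ r σ = 1 := by
  have := weightedMoment_childSubtreeW (d := d) (h := h) (ρ := ρ) r 0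
  simp only [weightedMoment, pow_zero, mul_one, hmass] at this
  cases r <;> simp [this, isingEdge] <;> ring

lemma isingCondMoment_mass (r : Bool) : isingCondMoment d h ρ r 0 = 1 := by
  induction h generalizing r with
  | zero => simp [isingCondMoment_height_zero]
  | succ h ih =>
    rw [isingCondMoment_height_succ, iidSumMoment_zero_right _ (sum_childSubtreeW r ih)]

lemma weightedMoment_childSubtreeW_true (k : ℕ) :
    weightedMoment (childSubtreeW d h ρ true) (leafSum d h) k =
      ((1 + ρ) / 2 + (1 - ρ) / 2 * (-1) ^ k) * isingCondMoment d h ρ true k := by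
  rw [weightedMoment_childSubtreeW, Fintype.sum_bool, isingCondMoment_false]
  simp only [isingEdge]
  norm_num
  ring

lemma isingCondMoment_succ_one :
    isingCondMoment d (h + 1) ρ true 1 = d * ρ * isingCondMoment d h ρ true 1 := by
  rw [isingCondMoment_height_succ,
    iidSumMoment_one _ (sum_childSubtreeW true fun _ => isingCondMoment_mass _),
    weightedMoment_childSubtreeW_true]
  ring

lemma isingCondMoment_succ_two :
    isingCondMoment d (h + 1) ρ true 2 =
      d * isingCondMoment d h ρ true 2
        + d * (d - 1) * ρ ^ 2 * isingCondMoment d h ρ true 1 ^ 2 := by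
  rw [isingCondMoment_height_succ,
    iidSumMoment_two _ (sum_childSubtreeW true fun _ => isingCondMoment_mass _),
    weightedMoment_childSubtreeW_true, weightedMoment_childSubtreeW_true]
  ring

lemma isingCondMoment_succ_three :
    isingCondMoment d (h + 1) ρ true 3 =
      d * ρ * isingCondMoment d h ρ true 3
        + 3 * d * (d - 1) * ρ * isingCondMoment d h ρ true 2 * isingCondMoment d h ρ true 1
        + d * (d - 1) * (d - 2) * ρ ^ 3 * isingCondMoment d h ρ true 1 ^ 3 := by
  rw [isingCondMoment_height_succ,
    iidSumMoment_three _ (sum_childSubtreeW true fun _ => isingCondMoment_mass _),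
    weightedMoment_childSubtreeW_true, weightedMoment_childSubtreeW_true,
    weightedMoment_childSubtreeW_true]
  ring

end IsingMoments

section ClosedForms

variable {d : ℕ} {ρ : ℝ}

noncomputable def momentConst2 (d : ℕ) (ρ : ℝ) : ℝ :=
  ((d : ℝ) - 1) * ρ ^ 2 / ((d : ℝ) * ρ ^ 2 - 1)

lemma momentConst2_mul (hdρ : (d : ℝ) * ρ ^ 2 ≠ 1) :
    momentConst2 d ρ * ((d : ℝ) * ρ ^ 2 - 1) = ((d : ℝ) - 1) * ρ ^ 2 :=
  div_mul_cancel₀ _ (sub_ne_zero.mpr hdρ)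

lemma C3const_mul (hd : (d : ℝ) ≠ 0) (hdρ : (d : ℝ) * ρ ^ 2 ≠ 1)
    (hu : ((d : ℝ) * ρ) ^ 2 ≠ 1) :
    C3const d ρ * (((d : ℝ) * ρ) ^ 2 - 1) =
      ((d : ℝ) - 1) * (3 * momentConst2 d ρ + ((d : ℝ) - 2) * ρ ^ 2) := by
  have := sub_ne_zero.mpr hdρ
  rw [C3const, mul_comm, ← mul_assoc, mul_one_div_cancel (sub_ne_zero.mpr hu), one_mul,
    momentConst2]
  field_simp

lemma isingCondMoment_one (h : ℕ) : isingCondMoment d h ρ true 1 = ((d : ℝ) * ρ) ^ h := by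
  induction h with
  | zero => simp [isingCondMoment_height_zero, spinVal]
  | succ h ih => rw [isingCondMoment_succ_one, ih, pow_succ]; ring

lemma isingCondMoment_two (hdρ : (d : ℝ) * ρ ^ 2 ≠ 1) (h : ℕ) :
    isingCondMoment d h ρ true 2 =
      (1 - momentConst2 d ρ) * (d : ℝ) ^ h + momentConst2 d ρ * ((d : ℝ) * ρ) ^ (2 * h) := by
  induction h with
  | zero => simp [isingCondMoment_height_zero, spinVal]
  | succ h ih =>
    rw [isingCondMoment_succ_two, ih, isingCondMoment_one]
    linear_combination -(d : ℝ) * ((d : ℝ) * ρ) ^ (2 * h) * momentConst2_mul hdρ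

lemma isingCondMoment_three (hd : (d : ℝ) ≠ 0) (hdρ : (d : ℝ) * ρ ^ 2 ≠ 1)
    (hu : ((d : ℝ) * ρ) ^ 2 ≠ 1) (h : ℕ) :
    isingCondMoment d h ρ true 3 =
      (1 - 3 * (1 - momentConst2 d ρ) - C3const d ρ) * ((d : ℝ) * ρ) ^ h
        + 3 * (1 - momentConst2 d ρ) * ((d : ℝ) ^ 2 * ρ) ^ h
        + C3const d ρ * ((d : ℝ) * ρ) ^ (3 * h) := by
  induction h with
  | zero => simp [isingCondMoment_height_zero, spinVal]; ring
  | succ h ih =>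
    rw [isingCondMoment_succ_three, ih, isingCondMoment_two hdρ, isingCondMoment_one]
    linear_combination -(d : ℝ) * ρ * ((d : ℝ) * ρ) ^ (3 * h) * C3const_mul hd hdρ hu

end ClosedForms

theorem statement9_general (d : ℕ) (ρ : ℝ)
    (hKS : 1 < (d : ℝ) * ρ ^ 2) :
    Filter.Tendsto (fun h : ℕ => isingMoment d h ρ 3 / ((d : ℝ) * ρ) ^ (3 * h))
      Filter.atTop (nhds (C3const d ρ)) := by
  have hd : (1 : ℝ) ≤ d := by
    rcases Nat.eq_zero_or_pos d with rfl | hd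
    · simp at hKS; linarith
    · exact_mod_cast hd
  have hu : 1 < ((d : ℝ) * ρ) ^ 2 := by nlinarith
  have hu0 : (d : ℝ) * ρ ≠ 0 := by rintro h0; rw [h0] at hu; norm_num at hu
  have scaled : ∀ h : ℕ, isingMoment d h ρ 3 / ((d : ℝ) * ρ) ^ (3 * h) =
      (1 - 3 * (1 - momentConst2 d ρ) - C3const d ρ) * (((d : ℝ) * ρ) ^ 2)⁻¹ ^ h
        + 3 * (1 - momentConst2 d ρ) * ((d : ℝ) * ρ ^ 2)⁻¹ ^ h + C3const d ρ := by
    intro h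
    have ratio₁ : (d : ℝ) * ρ / ((d : ℝ) * ρ) ^ 3 = (((d : ℝ) * ρ) ^ 2)⁻¹ := by
      field_simp
    have ratio₂ : (d : ℝ) ^ 2 * ρ / ((d : ℝ) * ρ) ^ 3 = ((d : ℝ) * ρ ^ 2)⁻¹ := by
      field_simp
    rw [isingMoment, ← isingCondMoment, isingCondMoment_three (by positivity) hKS.ne' hu.ne',
      ← ratio₁, ← ratio₂, div_pow, div_pow, ← pow_mul]
    field_simp
  have geom : ∀ {x : ℝ}, 1 < x →
      Filter.Tendsto (fun h : ℕ => x⁻¹ ^ h) Filter.atTop (nhds 0) :=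
    fun hx => tendsto_pow_atTop_nhds_zero_of_lt_one (by positivity) (inv_lt_one_of_one_lt₀ hx)
  simp_rw [scaled]
  simpa using (((geom hu).const_mul _).add ((geom hKS).const_mul _)).add_const (C3const d ρ)

/-- Asymptotics of the third conditional moment of the leaf-spin sum of the
Ising broadcast process above the Kesten–Stigum threshold. -/
theorem statement9 (d : ℕ) (hd : 2 ≤ d) (ρ : ℝ) (hρ0 : 0 < ρ) (hρ1 : ρ < 1)
    (hKS : 1 < (d : ℝ) * ρ ^ 2) :
    Filter.Tendsto (fun h : ℕ => isingMoment d h ρ 3 / ((d : ℝ) * ρ) ^ (3 * h))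
      Filter.atTop (nhds (C3const d ρ)) :=
  statement9_general d ρ hKS
end

section
/- In the autoregressive Ising broadcast process with context depth w on T(d,h), for every i ≥ 1 and j ≥ 1 the block sums satisfy E[Z_i Z_{i+j}] = (dρ)^{2w}·α·(α·q_w)^{j−1}. -/
open Finset

noncomputable section


namespace ARP

variable {d w : ℕ} {ρ : ℝ}

lemma sum_isingEdge (a : Bool) : ∑ b : Bool, isingEdge ρ a b = 1 := by
  cases a <;> simp [isingEdge, Fintype.sum_bool] <;> ring

lemma sum_isingEdge_spin (a : Bool) :
    ∑ b : Bool, isingEdge ρ a b * spinVal b = ρ * spinVal a := by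
  cases a <;> simp [isingEdge, spinVal, Fintype.sum_bool] <;> ring

def treeSnoc {S : Type} {d w : ℕ} (τ : TreeConfig d w S) (t : (Fin (w+1) → Fin d) → S) :
    TreeConfig d (w+1) S :=
  Fin.snoc (α := fun ℓ : Fin (w+1+1) => (Fin ℓ.val → Fin d) → S) τ t

lemma treeSnoc_lt {S : Type} (τ : TreeConfig d w S) (t : (Fin (w+1) → Fin d) → S)
    (v : ℕ) (h1 : v < w + 1) (h2 : v < w + 2) :
    treeSnoc τ t ⟨v, h2⟩ = τ ⟨v, h1⟩ := by
  exact Fin.snoc_castSucc (α := fun ℓ : Fin (w+1+1) => (Fin ℓ.val → Fin d) → S) t τ ⟨v, h1⟩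

lemma treeSnoc_last {S : Type} (τ : TreeConfig d w S) (t : (Fin (w+1) → Fin d) → S)
    (h2 : w + 1 < w + 2) :
    treeSnoc τ t ⟨w+1, h2⟩ = t := by
  exact Fin.snoc_last (α := fun ℓ : Fin (w+1+1) => (Fin ℓ.val → Fin d) → S) t τ

lemma sum_treeConfig_snoc {S : Type} [Fintype S] [DecidableEq S]
    (F : TreeConfig d (w+1) S → ℝ) :
    ∑ σ : TreeConfig d (w+1) S, F σ
      = ∑ τ : TreeConfig d w S, ∑ t : (Fin (w+1) → Fin d) → S, F (treeSnoc τ t) := by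
  rw [← Equiv.sum_comp (Fin.snocEquiv (fun ℓ : Fin (w+1+1) => (Fin ℓ.val → Fin d) → S)) F,
    Fintype.sum_prod_type, Finset.sum_comm]
  rfl

lemma rootOf_treeSnoc {S : Type} (τ : TreeConfig d w S) (t : (Fin (w+1) → Fin d) → S) :
    rootOf (treeSnoc τ t) = rootOf τ := by
  show treeSnoc τ t ⟨0, _⟩ Fin.elim0 = rootOf τ
  rw [treeSnoc_lt τ t 0 (Nat.succ_pos w)]
  rfl

lemma leavesOf_treeSnoc {S : Type} (τ : TreeConfig d w S) (t : (Fin (w+1) → Fin d) → S) :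
    leavesOf (treeSnoc τ t) = t := by
  show treeSnoc τ t ⟨w+1, _⟩ = t
  rw [treeSnoc_last]

lemma edgeProd_treeSnoc {S : Type} (W : S → S → ℝ) (τ : TreeConfig d w S)
    (t : (Fin (w+1) → Fin d) → S) :
    edgeProd d (w+1) W (treeSnoc τ t)
      = edgeProd d w W τ *
        ∏ f : Fin (w+1) → Fin d, W (leavesOf τ fun i => f i.castSucc) (t f) := by
  rw [edgeProd, Fin.prod_univ_castSucc]
  simp only [Fin.coe_castSucc, Fin.val_last]
  congr 1
  · rw [edgeProd]
    refine Finset.prod_congr rfl fun ℓ _ => ?_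
    refine Finset.prod_congr rfl fun f _ => ?_
    rw [treeSnoc_lt τ t ℓ.val (by omega), treeSnoc_lt τ t (ℓ.val+1) (by have := ℓ.isLt; omega)]
  · refine Finset.prod_congr rfl fun f _ => ?_
    rw [treeSnoc_lt τ t w (by omega), treeSnoc_last]
    rfl

def rootE (d : ℕ) (S : Type) : S ≃ TreeConfig d 0 S where
  toFun b := fun _ _ => b
  invFun σ := rootOf σ
  left_inv b := rfl
  right_inv σ := by
    funext ℓ p
    have hℓ : ℓ = ⟨0, Nat.succ_pos 0⟩ := Fin.ext (by omega)
    subst hℓ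
    have hp : p = Fin.elim0 := funext fun i => i.elim0
    show rootOf σ = σ ⟨0, Nat.succ_pos 0⟩ p
    rw [hp]
    rfl

lemma edgeProd_zero {S : Type} (W : S → S → ℝ) (σ : TreeConfig d 0 S) :
    edgeProd d 0 W σ = 1 := by
  simp [edgeProd]

lemma sum_isingWRooted_tree :
    ∀ (w : ℕ) (r : Bool), ∑ σ : TreeConfig d w Bool, isingWRooted d w ρ r σ = 1 := by
  intro w
  induction w with
  | zero =>
    intro r
    rw [← Equiv.sum_comp (rootE d Bool) (isingWRooted d 0 ρ r)]
    have : ∀ b : Bool, isingWRooted d 0 ρ r (rootE d Bool b) = if b = r then 1 else 0 := by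
      intro b
      rw [isingWRooted, edgeProd_zero, mul_one]
      rfl
    simp only [this]
    cases r <;> simp [Fintype.sum_bool]
  | succ w ih =>
    intro r
    rw [sum_treeConfig_snoc]
    have h1 : ∀ (τ : TreeConfig d w Bool) (t : (Fin (w+1) → Fin d) → Bool),
        isingWRooted d (w+1) ρ r (treeSnoc τ t)
          = isingWRooted d w ρ r τ *
            ∏ f : Fin (w+1) → Fin d, isingEdge ρ (leavesOf τ fun i => f i.castSucc) (t f) := by
      intro τ t
      rw [isingWRooted, isingWRooted, rootOf_treeSnoc, edgeProd_treeSnoc]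
      ring
    simp only [h1]
    have h2 : ∀ τ : TreeConfig d w Bool,
        ∑ t : (Fin (w+1) → Fin d) → Bool,
          ∏ f : Fin (w+1) → Fin d, isingEdge ρ (leavesOf τ fun i => f i.castSucc) (t f) = 1 := by
      intro τ
      have := (Finset.prod_univ_sum (fun _ : Fin (w+1) → Fin d => (Finset.univ : Finset Bool))
        (fun f b => isingEdge ρ (leavesOf τ fun i => f i.castSucc) b)).symm
      rw [Fintype.piFinset_univ] at this
      rw [this]
      exact Finset.prod_eq_one fun f _ => sum_isingEdge _
    calc ∑ τ : TreeConfig d w Bool, ∑ t : (Fin (w+1) → Fin d) → Bool,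
          isingWRooted d w ρ r τ *
            ∏ f : Fin (w+1) → Fin d, isingEdge ρ (leavesOf τ fun i => f i.castSucc) (t f)
        = ∑ τ : TreeConfig d w Bool, isingWRooted d w ρ r τ := by
          refine Finset.sum_congr rfl fun τ _ => ?_
          rw [← Finset.mul_sum, h2, mul_one]
      _ = 1 := ih r

lemma sum_isingWRooted_leaf :
    ∀ (w : ℕ) (r : Bool) (f₀ : Fin w → Fin d),
      ∑ σ : TreeConfig d w Bool, isingWRooted d w ρ r σ * spinVal (leavesOf σ f₀)
        = ρ ^ w * spinVal r := by
  intro w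
  induction w with
  | zero =>
    intro r f₀
    rw [← Equiv.sum_comp (rootE d Bool) (fun σ => isingWRooted d 0 ρ r σ * spinVal (leavesOf σ f₀))]
    have : ∀ b : Bool, isingWRooted d 0 ρ r (rootE d Bool b) * spinVal (leavesOf (rootE d Bool b) f₀)
        = (if b = r then 1 else 0) * spinVal b := by
      intro b
      rw [isingWRooted, edgeProd_zero, mul_one]
      rfl
    simp only [this]
    cases r <;> simp [Fintype.sum_bool, pow_zero]
  | succ w ih =>
    intro r f₀
    rw [sum_treeConfig_snoc]
    have h1 : ∀ (τ : TreeConfig d w Bool) (t : (Fin (w+1) → Fin d) → Bool),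
        isingWRooted d (w+1) ρ r (treeSnoc τ t) * spinVal (leavesOf (treeSnoc τ t) f₀)
          = isingWRooted d w ρ r τ *
            ((∏ f : Fin (w+1) → Fin d, isingEdge ρ (leavesOf τ fun i => f i.castSucc) (t f))
              * spinVal (t f₀)) := by
      intro τ t
      rw [isingWRooted, isingWRooted, rootOf_treeSnoc, edgeProd_treeSnoc, leavesOf_treeSnoc]
      ring
    simp only [h1]
    have h2 : ∀ τ : TreeConfig d w Bool,
        ∑ t : (Fin (w+1) → Fin d) → Bool,
          (∏ f : Fin (w+1) → Fin d, isingEdge ρ (leavesOf τ fun i => f i.castSucc) (t f))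
            * spinVal (t f₀)
          = ρ * spinVal (leavesOf τ fun i => f₀ i.castSucc) := by
      intro τ
      have e1 : ∀ t : (Fin (w+1) → Fin d) → Bool,
          (∏ f : Fin (w+1) → Fin d, isingEdge ρ (leavesOf τ fun i => f i.castSucc) (t f))
            * spinVal (t f₀)
          = ∏ f : Fin (w+1) → Fin d,
              (isingEdge ρ (leavesOf τ fun i => f i.castSucc) (t f)
                * if f = f₀ then spinVal (t f) else 1) := by
        intro t
        rw [Finset.prod_mul_distrib, Finset.prod_ite_eq' Finset.univ f₀ (fun f => spinVal (t f))]
        simp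
      simp only [e1]
      have e2 := (Finset.prod_univ_sum (fun _ : Fin (w+1) → Fin d => (Finset.univ : Finset Bool))
        (fun f b => isingEdge ρ (leavesOf τ fun i => f i.castSucc) b
          * if f = f₀ then spinVal b else 1)).symm
      rw [Fintype.piFinset_univ] at e2
      rw [e2]
      rw [Finset.prod_eq_single_of_mem f₀ (Finset.mem_univ _)
        (by
          intro f _ hf
          simp only [if_neg hf, mul_one]
          exact sum_isingEdge _)]
      simp only [if_pos rfl]
      exact sum_isingEdge_spin _
    calc ∑ τ : TreeConfig d w Bool, ∑ t : (Fin (w+1) → Fin d) → Bool,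
          isingWRooted d w ρ r τ *
            ((∏ f : Fin (w+1) → Fin d, isingEdge ρ (leavesOf τ fun i => f i.castSucc) (t f))
              * spinVal (t f₀))
        = ∑ τ : TreeConfig d w Bool,
            isingWRooted d w ρ r τ * (ρ * spinVal (leavesOf τ fun i => f₀ i.castSucc)) := by
          refine Finset.sum_congr rfl fun τ _ => ?_
          rw [← Finset.mul_sum, h2]
      _ = ρ * ∑ σ : TreeConfig d w Bool,
            isingWRooted d w ρ r σ * spinVal (leavesOf σ fun i => f₀ i.castSucc) := by
          rw [Finset.mul_sum]; refine Finset.sum_congr rfl fun τ _ => by ring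
      _ = ρ ^ (w+1) * spinVal r := by rw [ih r]; ring

def Num (d w : ℕ) (ρ : ℝ) (y : (Fin w → Fin d) → Bool) : ℝ :=
  ∑ σ : TreeConfig d w Bool, if leavesOf σ = y then isingW d w ρ σ * spinVal (rootOf σ) else 0

lemma rootPostMean_eq (y : (Fin w → Fin d) → Bool) :
    rootPostMean d w ρ y = Num d w ρ y / leafW d w ρ y := rfl

lemma qIsing_eq :
    qIsing d w ρ = ∑ y : (Fin w → Fin d) → Bool, leafW d w ρ y * rootPostMean d w ρ y ^ 2 := rfl

lemma sum_leaf_marg (A : TreeConfig d w Bool → ℝ) (g : ((Fin w → Fin d) → Bool) → ℝ) :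
    ∑ y : (Fin w → Fin d) → Bool,
        (∑ σ : TreeConfig d w Bool, if leavesOf σ = y then A σ else 0) * g y
      = ∑ σ : TreeConfig d w Bool, A σ * g (leavesOf σ) := by
  simp only [Finset.sum_mul]
  rw [Finset.sum_comm]
  refine Finset.sum_congr rfl fun σ _ => ?_
  have h : ∀ y : (Fin w → Fin d) → Bool,
      (if leavesOf σ = y then A σ else 0) * g y
        = if leavesOf σ = y then A σ * g y else 0 := fun y => by split <;> simp
  simp only [h]
  rw [Finset.sum_ite_eq]
  simp

lemma leafWRooted_add (y : (Fin w → Fin d) → Bool) :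
    leafWRooted d w ρ true y + leafWRooted d w ρ false y = 2 * leafW d w ρ y := by
  unfold leafWRooted leafW
  rw [← Finset.sum_add_distrib, Finset.mul_sum]
  refine Finset.sum_congr rfl fun σ _ => ?_
  by_cases h : leavesOf σ = y
  · simp only [if_pos h]
    cases hr : rootOf σ <;> simp [isingWRooted, isingW, broadcastW, hr] <;> ring
  · simp [h]

lemma leafWRooted_sub (y : (Fin w → Fin d) → Bool) :
    leafWRooted d w ρ true y - leafWRooted d w ρ false y = 2 * Num d w ρ y := by
  unfold leafWRooted Num
  rw [← Finset.sum_sub_distrib, Finset.mul_sum]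
  refine Finset.sum_congr rfl fun σ _ => ?_
  by_cases h : leavesOf σ = y
  · simp only [if_pos h]
    cases hr : rootOf σ <;> simp [isingWRooted, isingW, broadcastW, hr, spinVal] <;> ring
  · simp [h]

lemma edgeProd_nonneg (hρ : ρ ∈ Set.Icc (0:ℝ) 1) (σ : TreeConfig d w Bool) :
    0 ≤ edgeProd d w (isingEdge ρ) σ := by
  refine Finset.prod_nonneg fun ℓ _ => Finset.prod_nonneg fun f _ => ?_
  obtain ⟨h0, h1⟩ := hρ
  unfold isingEdge; split <;> linarith

lemma leafWRooted_nonneg (hρ : ρ ∈ Set.Icc (0:ℝ) 1) (r : Bool) (y : (Fin w → Fin d) → Bool) :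
    0 ≤ leafWRooted d w ρ r y := by
  refine Finset.sum_nonneg fun σ _ => ?_
  split
  · refine mul_nonneg ?_ (edgeProd_nonneg hρ σ)
    split <;> norm_num
  · exact le_rfl

lemma leafW_zero (hρ : ρ ∈ Set.Icc (0:ℝ) 1) {y : (Fin w → Fin d) → Bool}
    (h : leafW d w ρ y = 0) (r : Bool) : leafWRooted d w ρ r y = 0 := by
  have h1 := leafWRooted_nonneg (d:=d) (w:=w) hρ true y
  have h2 := leafWRooted_nonneg (d:=d) (w:=w) hρ false y
  have h3 := leafWRooted_add (d:=d) (w:=w) (ρ:=ρ) y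
  rw [h] at h3
  cases r <;> linarith

lemma Num_zero (hρ : ρ ∈ Set.Icc (0:ℝ) 1) {y : (Fin w → Fin d) → Bool}
    (h : leafW d w ρ y = 0) : Num d w ρ y = 0 := by
  have h3 := leafWRooted_sub (d:=d) (w:=w) (ρ:=ρ) y
  rw [leafW_zero hρ h true, leafW_zero hρ h false] at h3
  linarith

lemma leafW_mul_post (hρ : ρ ∈ Set.Icc (0:ℝ) 1) (y : (Fin w → Fin d) → Bool) :
    leafW d w ρ y * rootPostMean d w ρ y = Num d w ρ y := by
  rw [rootPostMean_eq]
  by_cases h : leafW d w ρ y = 0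
  · rw [h, zero_mul, Num_zero hρ h]
  · rw [mul_comm, div_mul_cancel₀ _ h]

lemma isingEdge_not (a b : Bool) : isingEdge ρ (!a) (!b) = isingEdge ρ a b := by
  cases a <;> cases b <;> simp [isingEdge]

def flipT (σ : TreeConfig d w Bool) : TreeConfig d w Bool := fun ℓ p => !(σ ℓ p)

def flipE (d w : ℕ) : TreeConfig d w Bool ≃ TreeConfig d w Bool :=
  Function.Involutive.toPerm flipT (fun σ => by funext ℓ p; simp [flipT])

def yflipE (d w : ℕ) : ((Fin w → Fin d) → Bool) ≃ ((Fin w → Fin d) → Bool) :=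
  Function.Involutive.toPerm (fun y f => !(y f)) (fun y => by funext f; simp)

lemma edgeProd_flip (σ : TreeConfig d w Bool) :
    edgeProd d w (isingEdge ρ) (flipT σ) = edgeProd d w (isingEdge ρ) σ :=
  Finset.prod_congr rfl fun ℓ _ => Finset.prod_congr rfl fun f _ => isingEdge_not _ _

lemma leafWRooted_flip (r : Bool) (y : (Fin w → Fin d) → Bool) :
    leafWRooted d w ρ r (fun f => !(y f)) = leafWRooted d w ρ (!r) y := by
  unfold leafWRooted
  rw [← Equiv.sum_comp (flipE d w)]
  refine Finset.sum_congr rfl fun σ _ => ?_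
  have hc : (leavesOf ((flipE d w) σ) = fun f => !(y f)) ↔ (leavesOf σ = y) := by
    constructor
    · intro h; funext f
      have h2 : (!(leavesOf σ f)) = !(y f) := congrFun h f
      simpa using h2
    · intro h; subst h; rfl
  have hb : isingWRooted d w ρ r ((flipE d w) σ) = isingWRooted d w ρ (!r) σ := by
    have hroot : rootOf ((flipE d w) σ) = !(rootOf σ) := rfl
    have hedge : edgeProd d w (isingEdge ρ) ((flipE d w) σ) = edgeProd d w (isingEdge ρ) σ :=
      edgeProd_flip σ
    unfold isingWRooted
    rw [hroot, hedge]
    cases rootOf σ <;> cases r <;> simp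
  exact if_congr hc hb rfl

lemma leafW_flip (y : (Fin w → Fin d) → Bool) :
    leafW d w ρ (fun f => !(y f)) = leafW d w ρ y := by
  have h1 := leafWRooted_add (d:=d) (w:=w) (ρ:=ρ) (fun f => !(y f))
  have h2 := leafWRooted_add (d:=d) (w:=w) (ρ:=ρ) y
  rw [leafWRooted_flip, leafWRooted_flip] at h1
  simp only [Bool.not_true, Bool.not_false] at h1
  linarith

lemma Num_flip (y : (Fin w → Fin d) → Bool) :
    Num d w ρ (fun f => !(y f)) = - Num d w ρ y := by
  have h1 := leafWRooted_sub (d:=d) (w:=w) (ρ:=ρ) (fun f => !(y f))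
  have h2 := leafWRooted_sub (d:=d) (w:=w) (ρ:=ρ) y
  rw [leafWRooted_flip, leafWRooted_flip] at h1
  simp only [Bool.not_true, Bool.not_false] at h1
  linarith

lemma post_flip (y : (Fin w → Fin d) → Bool) :
    rootPostMean d w ρ (fun f => !(y f)) = - rootPostMean d w ρ y := by
  rw [rootPostMean_eq, rootPostMean_eq, Num_flip, leafW_flip, neg_div]

lemma sum_leafWRooted (r : Bool) :
    ∑ y : (Fin w → Fin d) → Bool, leafWRooted d w ρ r y = 1 := by
  have h := sum_leaf_marg (d:=d) (w:=w) (isingWRooted d w ρ r) (fun _ => 1)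
  simp only [mul_one] at h
  unfold leafWRooted
  rw [h, sum_isingWRooted_tree w r]

lemma sum_leafWRooted_blockSum (r : Bool) :
    ∑ y : (Fin w → Fin d) → Bool, leafWRooted d w ρ r y * blockSum d w y
      = ((d:ℝ)^w * ρ^w) * spinVal r := by
  have h := sum_leaf_marg (d:=d) (w:=w) (isingWRooted d w ρ r) (blockSum d w)
  unfold leafWRooted
  rw [h]
  have h2 : ∀ σ : TreeConfig d w Bool,
      isingWRooted d w ρ r σ * blockSum d w (leavesOf σ)
        = ∑ f : Fin w → Fin d, isingWRooted d w ρ r σ * spinVal (leavesOf σ f) := by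
    intro σ; rw [blockSum, Finset.mul_sum]
  simp only [h2]
  rw [Finset.sum_comm]
  rw [Finset.sum_congr rfl fun f _ => sum_isingWRooted_leaf w r f]
  rw [Finset.sum_const, Finset.card_univ, Fintype.card_fun, Fintype.card_fin, Fintype.card_fin,
    nsmul_eq_mul]
  push_cast
  ring

lemma sum_leafWRooted_post (hρ : ρ ∈ Set.Icc (0:ℝ) 1) (r : Bool) :
    ∑ y : (Fin w → Fin d) → Bool, leafWRooted d w ρ r y * rootPostMean d w ρ y
      = qIsing d w ρ * spinVal r := by
  have hq : ∑ y : (Fin w → Fin d) → Bool, Num d w ρ y * rootPostMean d w ρ y = qIsing d w ρ := by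
    rw [qIsing_eq]
    refine Finset.sum_congr rfl fun y _ => ?_
    have h := leafW_mul_post (d:=d) (w:=w) hρ y
    linear_combination (- rootPostMean d w ρ y) * h
  have hflip : ∑ y : (Fin w → Fin d) → Bool, leafWRooted d w ρ false y * rootPostMean d w ρ y
      = - ∑ y : (Fin w → Fin d) → Bool, leafWRooted d w ρ true y * rootPostMean d w ρ y := by
    rw [← Equiv.sum_comp (yflipE d w)
      (fun y => leafWRooted d w ρ false y * rootPostMean d w ρ y)]
    rw [← Finset.sum_neg_distrib]
    refine Finset.sum_congr rfl fun y _ => ?_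
    show leafWRooted d w ρ false (fun f => !(y f)) * rootPostMean d w ρ (fun f => !(y f)) = _
    rw [leafWRooted_flip, post_flip]
    simp
  have hdiff : ∑ y : (Fin w → Fin d) → Bool, leafWRooted d w ρ true y * rootPostMean d w ρ y
      - ∑ y : (Fin w → Fin d) → Bool, leafWRooted d w ρ false y * rootPostMean d w ρ y
      = 2 * qIsing d w ρ := by
    rw [← Finset.sum_sub_distrib, ← hq, Finset.mul_sum]
    refine Finset.sum_congr rfl fun y _ => ?_
    have h := leafWRooted_sub (d:=d) (w:=w) (ρ:=ρ) y
    linear_combination rootPostMean d w ρ y * h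
  have hT : ∑ y : (Fin w → Fin d) → Bool, leafWRooted d w ρ true y * rootPostMean d w ρ y
      = qIsing d w ρ := by linarith
  cases r
  · rw [hflip, hT]; simp [spinVal]
  · rw [hT]; simp [spinVal]


lemma sum_leafW_block_post (hρ : ρ ∈ Set.Icc (0:ℝ) 1) :
    ∑ y : (Fin w → Fin d) → Bool,
        leafW d w ρ y * (blockSum d w y * rootPostMean d w ρ y)
      = (d:ℝ)^w * ρ^w := by
  have h1 := sum_leafWRooted_blockSum (d:=d) (w:=w) (ρ:=ρ) true
  have h2 := sum_leafWRooted_blockSum (d:=d) (w:=w) (ρ:=ρ) false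
  simp only [spinVal, if_pos, if_neg, Bool.false_eq_true, reduceIte, mul_one] at h1 h2
  have e : ∀ y : (Fin w → Fin d) → Bool,
      leafW d w ρ y * (blockSum d w y * rootPostMean d w ρ y)
        = (leafWRooted d w ρ true y * blockSum d w y
            - leafWRooted d w ρ false y * blockSum d w y) / 2 := by
    intro y
    have ha := leafW_mul_post (d:=d) (w:=w) hρ y
    have hb := leafWRooted_sub (d:=d) (w:=w) (ρ:=ρ) y
    linear_combination blockSum d w y * ha - blockSum d w y / 2 * hb
  simp only [e]
  rw [← Finset.sum_div, Finset.sum_sub_distrib, h1, h2]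
  ring

lemma lca_sum_one {m : ℕ} (hd : 2 ≤ d) (hm : 1 ≤ m) :
    ∑ s ∈ Finset.Icc 1 m, lcaLaw d m s = 1 := by
  have hd1 : (1:ℝ) < (d:ℝ) := by exact_mod_cast hd
  have hdm : (1:ℝ) < (d:ℝ)^m := one_lt_pow₀ hd1 (by omega)
  have h1 : ∑ s ∈ Finset.Icc 1 m, lcaLaw d m s
      = ((d:ℝ)-1)/((d:ℝ)^m - 1) * ∑ s ∈ Finset.Icc 1 m, (d:ℝ)^(m-s) := by
    rw [Finset.mul_sum]
    refine Finset.sum_congr rfl fun s hs => ?_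
    rw [Finset.mem_Icc] at hs
    rw [lcaLaw, if_pos hs]
    ring
  have h2 : ∑ s ∈ Finset.Icc 1 m, (d:ℝ)^(m-s) = ∑ k ∈ Finset.range m, (d:ℝ)^k := by
    refine Finset.sum_nbij' (fun s => m - s) (fun k => m - k) ?_ ?_ ?_ ?_ ?_
    · intro s hs; rw [Finset.mem_Icc] at hs; rw [Finset.mem_range]; omega
    · intro k hk; rw [Finset.mem_range] at hk; rw [Finset.mem_Icc]; omega
    · intro s hs; rw [Finset.mem_Icc] at hs; omega
    · intro k hk; rw [Finset.mem_range] at hk; omega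
    · intro s _; rfl
  rw [h1, h2, geom_sum_eq hd1.ne' m]
  field_simp
  rw [mul_comm ((d:ℝ) - 1) ((d:ℝ)^m - 1)]
  exact div_self (mul_ne_zero (by linarith) (by linarith))

lemma pair_contract (s : ℕ) (y : (Fin w → Fin d) → Bool) (V : Bool → ℝ) :
    ∑ r : Bool, ∑ r' : Bool,
        pairRootW ρ s r r' * leafWRooted d w ρ r y * V r'
      = leafW d w ρ y * (V true + V false) / 2
        + Num d w ρ y * ρ^(2*s) * (V true - V false) / 2 := by
  have h1 := leafWRooted_add (d:=d) (w:=w) (ρ:=ρ) y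
  have h2 := leafWRooted_sub (d:=d) (w:=w) (ρ:=ρ) y
  simp [Fintype.sum_bool, pairRootW, spinVal]
  linear_combination ((V true + V false)/4) * h1 + (ρ^(2*s) * (V true - V false)/4) * h2

lemma arStep_apply {m : ℕ} (y : (Fin w → Fin d) → Bool)
    (g : ((Fin w → Fin d) → Bool) → ℝ) (V : Bool → ℝ)
    (hV : ∀ r', ∑ y' : (Fin w → Fin d) → Bool, leafWRooted d w ρ r' y' * g y' = V r') :
    ∑ y' : (Fin w → Fin d) → Bool, arStep d w m ρ y y' * g y'
      = ∑ s ∈ Finset.Icc 1 m, lcaLaw d m s *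
          ((leafW d w ρ y * (V true + V false) / 2
            + Num d w ρ y * ρ^(2*s) * (V true - V false) / 2) / leafW d w ρ y) := by
  unfold arStep
  simp only [Finset.sum_mul]
  rw [Finset.sum_comm]
  refine Finset.sum_congr rfl fun s _ => ?_
  have key : ∑ y' : (Fin w → Fin d) → Bool,
      (∑ r : Bool, ∑ r' : Bool,
        pairRootW ρ s r r' * leafWRooted d w ρ r y * leafWRooted d w ρ r' y') * g y'
      = leafW d w ρ y * (V true + V false) / 2
        + Num d w ρ y * ρ^(2*s) * (V true - V false) / 2 := by
    simp only [Finset.sum_mul]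
    rw [Finset.sum_comm]
    rw [← pair_contract (d:=d) (w:=w) (ρ:=ρ) s y V]
    refine Finset.sum_congr rfl fun r _ => ?_
    rw [Finset.sum_comm]
    refine Finset.sum_congr rfl fun r' _ => ?_
    rw [← hV r', Finset.mul_sum]
    refine Finset.sum_congr rfl fun y' _ => by ring
  calc ∑ y' : (Fin w → Fin d) → Bool,
        lcaLaw d m s *
          ((∑ r : Bool, ∑ r' : Bool,
            pairRootW ρ s r r' * leafWRooted d w ρ r y * leafWRooted d w ρ r' y')
            / leafW d w ρ y) * g y'
      = lcaLaw d m s * ((∑ y' : (Fin w → Fin d) → Bool,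
          (∑ r : Bool, ∑ r' : Bool,
            pairRootW ρ s r r' * leafWRooted d w ρ r y * leafWRooted d w ρ r' y') * g y')
          / leafW d w ρ y) := by
        rw [Finset.sum_div, Finset.mul_sum]
        refine Finset.sum_congr rfl fun y' _ => by ring
    _ = _ := by rw [key]

lemma arStep_rowsum {m : ℕ} (hd : 2 ≤ d) (hm : 1 ≤ m) {y : (Fin w → Fin d) → Bool}
    (hy : leafW d w ρ y ≠ 0) :
    ∑ y' : (Fin w → Fin d) → Bool, arStep d w m ρ y y' = 1 := by
  have h := arStep_apply (m:=m) (ρ:=ρ) y (fun _ => 1) (fun _ => 1)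
    (fun r' => by simpa using sum_leafWRooted (d:=d) (w:=w) (ρ:=ρ) r')
  simp only [mul_one] at h
  rw [h]
  have hterm : ∀ s ∈ Finset.Icc 1 m, lcaLaw d m s *
      ((leafW d w ρ y * (1 + 1) / 2 + Num d w ρ y * ρ^(2*s) * (1 - 1) / 2) / leafW d w ρ y)
      = lcaLaw d m s := by
    intro s _
    rw [show leafW d w ρ y * (1 + 1) / 2 + Num d w ρ y * ρ^(2*s) * (1 - 1) / 2
        = leafW d w ρ y by ring, div_self hy, mul_one]
  rw [Finset.sum_congr rfl hterm, lca_sum_one (d:=d) (m:=m) hd hm]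

lemma arStep_zero {m : ℕ} (hρ : ρ ∈ Set.Icc (0:ℝ) 1) (y : (Fin w → Fin d) → Bool)
    {y' : (Fin w → Fin d) → Bool} (h : leafW d w ρ y' = 0) :
    arStep d w m ρ y y' = 0 := by
  unfold arStep
  have hz : ∀ r', leafWRooted d w ρ r' y' = 0 := leafW_zero hρ h
  simp [hz]

lemma arStep_block {m : ℕ} (y : (Fin w → Fin d) → Bool) :
    ∑ y' : (Fin w → Fin d) → Bool, arStep d w m ρ y y' * blockSum d w y'
      = alphaAR d m ρ * (((d:ℝ)^w * ρ^w) * rootPostMean d w ρ y) := by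
  have h := arStep_apply (m:=m) (ρ:=ρ) y (blockSum d w)
    (fun r' => ((d:ℝ)^w * ρ^w) * spinVal r')
    (fun r' => sum_leafWRooted_blockSum (d:=d) (w:=w) (ρ:=ρ) r')
  rw [h, rootPostMean_eq, alphaAR, Finset.sum_mul]
  refine Finset.sum_congr rfl fun s _ => ?_
  simp only [spinVal]
  norm_num
  ring

lemma arStep_post {m : ℕ} (y : (Fin w → Fin d) → Bool) (hρ : ρ ∈ Set.Icc (0:ℝ) 1) :
    ∑ y' : (Fin w → Fin d) → Bool, arStep d w m ρ y y' * rootPostMean d w ρ y'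
      = alphaAR d m ρ * (qIsing d w ρ * rootPostMean d w ρ y) := by
  have h := arStep_apply (m:=m) (ρ:=ρ) y (rootPostMean d w ρ)
    (fun r' => qIsing d w ρ * spinVal r')
    (fun r' => sum_leafWRooted_post (d:=d) (w:=w) hρ r')
  rw [h, rootPostMean_eq, alphaAR, Finset.sum_mul]
  refine Finset.sum_congr rfl fun s _ => ?_
  simp only [spinVal]
  norm_num
  ring

lemma leafW_mul_arStep {m : ℕ} (hρ : ρ ∈ Set.Icc (0:ℝ) 1)
    (y y' : (Fin w → Fin d) → Bool) :
    leafW d w ρ y * arStep d w m ρ y y'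
      = ∑ s ∈ Finset.Icc 1 m, lcaLaw d m s *
          (∑ r : Bool, ∑ r' : Bool,
            pairRootW ρ s r r' * leafWRooted d w ρ r y * leafWRooted d w ρ r' y') := by
  unfold arStep
  by_cases hy : leafW d w ρ y = 0
  · have hz : ∀ r, leafWRooted d w ρ r y = 0 := leafW_zero hρ hy
    simp [hz, hy]
  · rw [Finset.mul_sum]
    refine Finset.sum_congr rfl fun s _ => ?_
    field_simp

lemma stationary {m : ℕ} (hd : 2 ≤ d) (hm : 1 ≤ m) (hρ : ρ ∈ Set.Icc (0:ℝ) 1)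
    (y' : (Fin w → Fin d) → Bool) :
    ∑ y : (Fin w → Fin d) → Bool, leafW d w ρ y * arStep d w m ρ y y'
      = leafW d w ρ y' := by
  simp only [leafW_mul_arStep (m:=m) hρ]
  rw [Finset.sum_comm]
  have hs : ∀ s, ∑ y : (Fin w → Fin d) → Bool,
      lcaLaw d m s * (∑ r : Bool, ∑ r' : Bool,
        pairRootW ρ s r r' * leafWRooted d w ρ r y * leafWRooted d w ρ r' y')
      = lcaLaw d m s * leafW d w ρ y' := by
    intro s
    rw [← Finset.mul_sum]
    congr 1
    have h1 : ∑ y : (Fin w → Fin d) → Bool, ∑ r : Bool, ∑ r' : Bool,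
        pairRootW ρ s r r' * leafWRooted d w ρ r y * leafWRooted d w ρ r' y'
        = ∑ r : Bool, ∑ r' : Bool,
            pairRootW ρ s r r' * (∑ y : (Fin w → Fin d) → Bool, leafWRooted d w ρ r y)
              * leafWRooted d w ρ r' y' := by
      rw [Finset.sum_comm]
      refine Finset.sum_congr rfl fun r _ => ?_
      rw [Finset.sum_comm]
      refine Finset.sum_congr rfl fun r' _ => ?_
      rw [← Finset.sum_mul, ← Finset.mul_sum]
    rw [h1]
    simp only [sum_leafWRooted, mul_one]
    have h2 := leafWRooted_add (d:=d) (w:=w) (ρ:=ρ) y'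
    simp only [Fintype.sum_bool, pairRootW, spinVal]
    norm_num
    linarith
  simp only [hs]
  rw [← Finset.sum_mul, lca_sum_one hd hm, one_mul]

def cvK (d w m : ℕ) (ρ : ℝ) :
    List (((Fin w → Fin d) → Bool) → ℝ) → ((Fin w → Fin d) → Bool) → ℝ
  | [], _ => 1
  | g :: gs, y => ∑ y' : (Fin w → Fin d) → Bool,
      arStep d w m ρ y y' * (g y' * cvK d w m ρ gs y')

lemma cvK_nil {m : ℕ} (y : (Fin w → Fin d) → Bool) : cvK d w m ρ [] y = 1 := rfl

lemma cvK_cons {m : ℕ} (g : ((Fin w → Fin d) → Bool) → ℝ)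
    (gs : List (((Fin w → Fin d) → Bool) → ℝ)) (y : (Fin w → Fin d) → Bool) :
    cvK d w m ρ (g :: gs) y
      = ∑ y' : (Fin w → Fin d) → Bool, arStep d w m ρ y y' * (g y' * cvK d w m ρ gs y') := rfl

lemma cvK_ones {m : ℕ} (hd : 2 ≤ d) (hm : 1 ≤ m) (hρ : ρ ∈ Set.Icc (0:ℝ) 1) :
    ∀ (k : ℕ) (y : (Fin w → Fin d) → Bool), leafW d w ρ y ≠ 0 →
      cvK d w m ρ (List.replicate k (fun _ => (1:ℝ))) y = 1 := by
  intro k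
  induction k with
  | zero => intro y _; rfl
  | succ k ih =>
    intro y hy
    rw [List.replicate_succ, cvK_cons]
    have hterm : ∀ y' : (Fin w → Fin d) → Bool,
        arStep d w m ρ y y' *
            ((fun _ => (1:ℝ)) y' * cvK d w m ρ (List.replicate k (fun _ => (1:ℝ))) y')
          = arStep d w m ρ y y' := by
      intro y'
      by_cases hy' : leafW d w ρ y' = 0
      · rw [arStep_zero hρ y hy']; ring
      · rw [ih y' hy']; ring
    rw [Finset.sum_congr rfl fun y' _ => hterm y']
    exact arStep_rowsum hd hm hy

lemma cvK_main {m : ℕ} (hd : 2 ≤ d) (hm : 1 ≤ m) (hρ : ρ ∈ Set.Icc (0:ℝ) 1) (t : ℕ) :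
    ∀ (k : ℕ) (y : (Fin w → Fin d) → Bool),
      cvK d w m ρ (List.replicate k (fun _ => (1:ℝ))
          ++ blockSum d w :: List.replicate t (fun _ => (1:ℝ))) y
        = (alphaAR d m ρ * qIsing d w ρ)^k
            * (alphaAR d m ρ * (((d:ℝ)^w * ρ^w) * rootPostMean d w ρ y)) := by
  intro k
  induction k with
  | zero =>
    intro y
    rw [List.replicate_zero, List.nil_append, cvK_cons]
    have hterm : ∀ y' : (Fin w → Fin d) → Bool,
        arStep d w m ρ y y' *
            (blockSum d w y' * cvK d w m ρ (List.replicate t (fun _ => (1:ℝ))) y')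
          = arStep d w m ρ y y' * blockSum d w y' := by
      intro y'
      by_cases hy' : leafW d w ρ y' = 0
      · rw [arStep_zero hρ y hy']; ring
      · rw [cvK_ones hd hm hρ t y' hy']; ring
    rw [Finset.sum_congr rfl fun y' _ => hterm y', arStep_block y, pow_zero, one_mul]
  | succ k ih =>
    intro y
    rw [List.replicate_succ, List.cons_append, cvK_cons]
    have hterm : ∀ y' : (Fin w → Fin d) → Bool,
        arStep d w m ρ y y' *
            ((fun _ => (1:ℝ)) y' *
              cvK d w m ρ (List.replicate k (fun _ => (1:ℝ))
                ++ blockSum d w :: List.replicate t (fun _ => (1:ℝ))) y')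
          = ((alphaAR d m ρ * qIsing d w ρ)^k * (alphaAR d m ρ * ((d:ℝ)^w * ρ^w)))
              * (arStep d w m ρ y y' * rootPostMean d w ρ y') := by
      intro y'; rw [ih y']; ring
    rw [Finset.sum_congr rfl fun y' _ => hterm y', ← Finset.mul_sum, arStep_post y hρ]
    ring

lemma front {m : ℕ} (hd : 2 ≤ d) (hm : 1 ≤ m) (hρ : ρ ∈ Set.Icc (0:ℝ) 1)
    (g : ((Fin w → Fin d) → Bool) → ℝ) (gs : List (((Fin w → Fin d) → Bool) → ℝ)) :
    ∑ y : (Fin w → Fin d) → Bool, leafW d w ρ y * cvK d w m ρ (g :: gs) y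
      = ∑ y : (Fin w → Fin d) → Bool, leafW d w ρ y * (g y * cvK d w m ρ gs y) := by
  simp only [cvK_cons, Finset.mul_sum]
  rw [Finset.sum_comm]
  refine Finset.sum_congr rfl fun y' _ => ?_
  have h : ∀ y : (Fin w → Fin d) → Bool,
      leafW d w ρ y * (arStep d w m ρ y y' * (g y' * cvK d w m ρ gs y'))
        = (leafW d w ρ y * arStep d w m ρ y y') * (g y' * cvK d w m ρ gs y') := fun y => by ring
  rw [Finset.sum_congr rfl fun y _ => h y, ← Finset.sum_mul, stationary hd hm hρ y']

lemma front_rep {m : ℕ} (hd : 2 ≤ d) (hm : 1 ≤ m) (hρ : ρ ∈ Set.Icc (0:ℝ) 1) :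
    ∀ (j : ℕ) (gs : List (((Fin w → Fin d) → Bool) → ℝ)),
      ∑ y : (Fin w → Fin d) → Bool,
          leafW d w ρ y * cvK d w m ρ (List.replicate j (fun _ => (1:ℝ)) ++ gs) y
        = ∑ y : (Fin w → Fin d) → Bool, leafW d w ρ y * cvK d w m ρ gs y := by
  intro j
  induction j with
  | zero => intro gs; rw [List.replicate_zero, List.nil_append]
  | succ j ih =>
    intro gs
    rw [List.replicate_succ, List.cons_append, front hd hm hρ]
    have h : ∀ y : (Fin w → Fin d) → Bool,
        leafW d w ρ y *
            ((fun _ => (1:ℝ)) y * cvK d w m ρ (List.replicate j (fun _ => (1:ℝ)) ++ gs) y)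
          = leafW d w ρ y * cvK d w m ρ (List.replicate j (fun _ => (1:ℝ)) ++ gs) y :=
      fun y => by ring
    rw [Finset.sum_congr rfl fun y _ => h y, ih]

lemma conv {m : ℕ} :
    ∀ (n : ℕ) (μ g0 : ((Fin w → Fin d) → Bool) → ℝ)
      (G : Fin n → ((Fin w → Fin d) → Bool) → ℝ),
      ∑ Y : Fin (n+1) → ((Fin w → Fin d) → Bool),
        (μ (Y 0) * ∏ i : Fin n, arStep d w m ρ (Y i.castSucc) (Y i.succ)) *
          (g0 (Y 0) * ∏ i : Fin n, G i (Y i.succ))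
      = ∑ y : (Fin w → Fin d) → Bool, μ y * (g0 y * cvK d w m ρ (List.ofFn G) y) := by
  intro n
  induction n with
  | zero =>
    intro μ g0 G
    rw [← Equiv.sum_comp (Equiv.funUnique (Fin 1) ((Fin w → Fin d) → Bool)).symm]
    refine Finset.sum_congr rfl fun y _ => ?_
    show (μ y * ∏ i : Fin 0, _) * (g0 y * ∏ i : Fin 0, _) = _
    simp [cvK_nil]
  | succ n ih =>
    intro μ g0 G
    rw [← Equiv.sum_comp (Fin.consEquiv (fun _ : Fin (n+1+1) => (Fin w → Fin d) → Bool)),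
      Fintype.sum_prod_type]
    have hstep : ∀ (y0 : (Fin w → Fin d) → Bool) (Y' : Fin (n+1) → (Fin w → Fin d) → Bool),
        (μ (Fin.cons (α := fun _ : Fin (n+1+1) => (Fin w → Fin d) → Bool) y0 Y' 0) *
            ∏ i : Fin (n+1), arStep d w m ρ
              (Fin.cons (α := fun _ : Fin (n+1+1) => (Fin w → Fin d) → Bool) y0 Y' i.castSucc)
              (Fin.cons (α := fun _ : Fin (n+1+1) => (Fin w → Fin d) → Bool) y0 Y' i.succ)) *
          (g0 (Fin.cons (α := fun _ : Fin (n+1+1) => (Fin w → Fin d) → Bool) y0 Y' 0) *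
            ∏ i : Fin (n+1), G i
              (Fin.cons (α := fun _ : Fin (n+1+1) => (Fin w → Fin d) → Bool) y0 Y' i.succ))
        = (μ y0 * g0 y0) *
            ((arStep d w m ρ y0 (Y' 0) *
                ∏ i : Fin n, arStep d w m ρ (Y' i.castSucc) (Y' i.succ)) *
              (G 0 (Y' 0) * ∏ i : Fin n, G i.succ (Y' i.succ))) := by
      intro y0 Y'
      rw [Fin.prod_univ_succ
          (f := fun i : Fin (n+1) => arStep d w m ρ
            (Fin.cons (α := fun _ : Fin (n+1+1) => (Fin w → Fin d) → Bool) y0 Y' i.castSucc)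
            (Fin.cons (α := fun _ : Fin (n+1+1) => (Fin w → Fin d) → Bool) y0 Y' i.succ)),
        Fin.prod_univ_succ (f := fun i : Fin (n+1) => G i
          (Fin.cons (α := fun _ : Fin (n+1+1) => (Fin w → Fin d) → Bool) y0 Y' i.succ))]
      simp only [Fin.castSucc_zero, Fin.cons_zero, ← Fin.succ_castSucc, Fin.cons_succ]
      ring
    have hsum : ∀ y0 : (Fin w → Fin d) → Bool,
        ∑ Y' : Fin (n+1) → (Fin w → Fin d) → Bool,
          (μ (Fin.cons (α := fun _ : Fin (n+1+1) => (Fin w → Fin d) → Bool) y0 Y' 0) *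
              ∏ i : Fin (n+1), arStep d w m ρ
                (Fin.cons (α := fun _ : Fin (n+1+1) => (Fin w → Fin d) → Bool) y0 Y' i.castSucc)
                (Fin.cons (α := fun _ : Fin (n+1+1) => (Fin w → Fin d) → Bool) y0 Y' i.succ)) *
            (g0 (Fin.cons (α := fun _ : Fin (n+1+1) => (Fin w → Fin d) → Bool) y0 Y' 0) *
              ∏ i : Fin (n+1), G i
                (Fin.cons (α := fun _ : Fin (n+1+1) => (Fin w → Fin d) → Bool) y0 Y' i.succ))
        = μ y0 * (g0 y0 * cvK d w m ρ (List.ofFn G) y0) := by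
      intro y0
      rw [Finset.sum_congr rfl fun Y' _ => hstep y0 Y', ← Finset.mul_sum,
        List.ofFn_succ, cvK_cons, ih (fun y => arStep d w m ρ y0 y) (G 0) (fun i => G i.succ)]
      ring
    exact Finset.sum_congr rfl fun y0 _ => hsum y0
lemma listId1 {α : Type} (Z o : α) (q nn : ℕ) (hq : q < nn) :
    List.ofFn (fun i : Fin nn => if (i:ℕ) = q then Z else o)
      = List.replicate q o ++ Z :: List.replicate (nn - 1 - q) o := by
  apply List.ext_getElem
  · simp only [List.length_ofFn, List.length_append, List.length_replicate, List.length_cons]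
    omega
  · intro i h1 h2
    simp only [List.getElem_ofFn, List.getElem_append, List.length_replicate,
      List.getElem_replicate, List.getElem_cons]
    split_ifs <;> first | rfl | omega

lemma listId2 {α : Type} (Z o : α) (p q nn : ℕ) (hpq : p < q) (hq : q < nn) :
    List.ofFn (fun i : Fin nn => if (i:ℕ) = p ∨ (i:ℕ) = q then Z else o)
      = List.replicate p o
          ++ Z :: (List.replicate (q - p - 1) o ++ Z :: List.replicate (nn - 1 - q) o) := by
  apply List.ext_getElem
  · simp only [List.length_ofFn, List.length_append, List.length_replicate, List.length_cons]
    omega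
  · intro i h1 h2
    simp only [List.getElem_ofFn, List.getElem_append, List.length_replicate,
      List.getElem_replicate, List.getElem_cons]
    split_ifs <;> first | rfl | omega

lemma main_sum (d w m : ℕ) (hd : 2 ≤ d) (hm : 1 ≤ m) (ρ : ℝ) (hρ : ρ ∈ Set.Icc (0:ℝ) 1)
    (n a b : ℕ) (hab : a < b) (hb : b < n) :
    ∑ Y : Fin n → ((Fin w → Fin d) → Bool),
        arWeight d w m n ρ Y *
          (blockSum d w (Y ⟨a, by omega⟩) * blockSum d w (Y ⟨b, hb⟩))
      = ((d:ℝ) * ρ) ^ (2*w) * alphaAR d m ρ *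
          (alphaAR d m ρ * qIsing d w ρ) ^ (b - a - 1) := by
  obtain ⟨n', rfl⟩ : ∃ n', n = n' + 1 := ⟨n - 1, by omega⟩
  have h0 : 0 < n' + 1 := Nat.succ_pos n'
  have hbn : b < n' + 1 := hb
  set Gfun : Fin (n'+1) → ((Fin w → Fin d) → Bool) → ℝ :=
    fun i => if (i:ℕ) = a ∨ (i:ℕ) = b then blockSum d w else (fun _ => (1:ℝ)) with hGfun
  have hobs : ∀ Y : Fin (n'+1) → ((Fin w → Fin d) → Bool),
      Gfun 0 (Y 0) * ∏ i : Fin n', Gfun i.succ (Y i.succ)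
        = blockSum d w (Y ⟨a, by omega⟩) * blockSum d w (Y ⟨b, hb⟩) := by
    intro Y
    rw [← Fin.prod_univ_succ (f := fun i : Fin (n'+1) => Gfun i (Y i))]
    have hsub : ∀ i ∈ Finset.univ, i ∉ ({⟨a, by omega⟩, ⟨b, hb⟩} : Finset (Fin (n'+1))) →
        Gfun i (Y i) = 1 := by
      intro i _ hi
      simp only [Finset.mem_insert, Finset.mem_singleton] at hi
      push_neg at hi
      obtain ⟨hia, hib⟩ := hi
      have h1 : (i:ℕ) ≠ a := fun h => hia (Fin.ext h)
      have h2 : (i:ℕ) ≠ b := fun h => hib (Fin.ext h)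
      simp only [hGfun, if_neg (by tauto : ¬((i:ℕ) = a ∨ (i:ℕ) = b))]
    have hne : (⟨a, by omega⟩ : Fin (n'+1)) ≠ ⟨b, hb⟩ :=
      Fin.ne_of_val_ne (by simpa using Nat.ne_of_lt hab)
    rw [← Finset.prod_subset (Finset.subset_univ _) hsub, Finset.prod_pair hne]
    have hA : Gfun ⟨a, by omega⟩ = blockSum d w := by
      simp only [hGfun]
      exact if_pos (Or.inl trivial)
    have hB : Gfun ⟨b, hb⟩ = blockSum d w := by
      simp only [hGfun]
      exact if_pos (Or.inr trivial)
    rw [hA, hB]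
  have hW : ∀ Y : Fin (n'+1) → ((Fin w → Fin d) → Bool),
      arWeight d w m (n'+1) ρ Y *
          (blockSum d w (Y ⟨a, by omega⟩) * blockSum d w (Y ⟨b, hb⟩))
        = (leafW d w ρ (Y 0) * ∏ i : Fin n', arStep d w m ρ (Y i.castSucc) (Y i.succ)) *
            (Gfun 0 (Y 0) * ∏ i : Fin n', Gfun i.succ (Y i.succ)) := by
    intro Y
    rw [← hobs Y, arWeight, dif_pos h0]
    rfl
  calc ∑ Y : Fin (n'+1) → ((Fin w → Fin d) → Bool),
        arWeight d w m (n'+1) ρ Y *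
          (blockSum d w (Y ⟨a, by omega⟩) * blockSum d w (Y ⟨b, hb⟩))
      = ∑ Y : Fin (n'+1) → ((Fin w → Fin d) → Bool),
          (leafW d w ρ (Y 0) * ∏ i : Fin n', arStep d w m ρ (Y i.castSucc) (Y i.succ)) *
            (Gfun 0 (Y 0) * ∏ i : Fin n', Gfun i.succ (Y i.succ)) :=
        Finset.sum_congr rfl fun Y _ => hW Y
    _ = ∑ y : (Fin w → Fin d) → Bool,
          leafW d w ρ y * (Gfun 0 y * cvK d w m ρ (List.ofFn fun i : Fin n' => Gfun i.succ) y) :=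
        conv n' (leafW d w ρ) (Gfun 0) (fun i => Gfun i.succ)
    _ = ((d:ℝ) * ρ) ^ (2*w) * alphaAR d m ρ *
          (alphaAR d m ρ * qIsing d w ρ) ^ (b - a - 1) := by
        have hpow : ((d:ℝ) * ρ)^(2*w) = ((d:ℝ)^w * ρ^w) * ((d:ℝ)^w * ρ^w) := by
          rw [two_mul, pow_add, mul_pow]
        by_cases ha0 : a = 0
        · subst ha0
          have hG0 : Gfun 0 = blockSum d w := by
            simp only [hGfun]
            exact if_pos (Or.inl (by simp))
          have hlist : (List.ofFn fun i : Fin n' => Gfun i.succ)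
              = List.replicate (b-1) (fun _ => (1:ℝ))
                  ++ blockSum d w :: List.replicate (n' - 1 - (b-1)) (fun _ => (1:ℝ)) := by
            have hfn : (fun i : Fin n' => Gfun i.succ)
                = (fun i : Fin n' =>
                    if (i:ℕ) = b - 1 then blockSum d w else (fun _ => (1:ℝ))) := by
              funext i
              simp only [hGfun, Fin.val_succ]
              exact if_congr (by omega) rfl rfl
            rw [hfn, listId1 _ _ (b-1) n' (by omega)]
          rw [hG0, hlist]
          have hfin : ∀ y : (Fin w → Fin d) → Bool,
              leafW d w ρ y * (blockSum d w y *
                cvK d w m ρ (List.replicate (b-1) (fun _ => (1:ℝ))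
                  ++ blockSum d w :: List.replicate (n' - 1 - (b-1)) (fun _ => (1:ℝ))) y)
              = ((alphaAR d m ρ * qIsing d w ρ)^(b-1) * (alphaAR d m ρ * ((d:ℝ)^w * ρ^w)))
                  * (leafW d w ρ y * (blockSum d w y * rootPostMean d w ρ y)) := by
            intro y
            rw [cvK_main hd hm hρ (n' - 1 - (b-1)) (b-1) y]
            ring
          rw [Finset.sum_congr rfl fun y _ => hfin y, ← Finset.mul_sum,
            sum_leafW_block_post hρ, hpow]
          simp only [Nat.sub_zero]
          ring
        · have hG0 : Gfun 0 = (fun _ => (1:ℝ)) := by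
            simp only [hGfun]
            refine if_neg ?_
            simp only [Fin.val_zero]
            omega
          have hlist : (List.ofFn fun i : Fin n' => Gfun i.succ)
              = List.replicate (a-1) (fun _ => (1:ℝ))
                  ++ blockSum d w :: (List.replicate (b-a-1) (fun _ => (1:ℝ))
                    ++ blockSum d w :: List.replicate (n' - 1 - (b-1)) (fun _ => (1:ℝ))) := by
            have hfn : (fun i : Fin n' => Gfun i.succ)
                = (fun i : Fin n' =>
                    if (i:ℕ) = a - 1 ∨ (i:ℕ) = b - 1 then blockSum d w
                    else (fun _ => (1:ℝ))) := by
              funext i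
              simp only [hGfun, Fin.val_succ]
              exact if_congr (by omega) rfl rfl
            rw [hfn, listId2 _ _ (a-1) (b-1) n' (by omega) (by omega)]
            rw [show (b-1) - (a-1) - 1 = b - a - 1 from by omega]
          rw [hG0, hlist]
          have h1 : ∀ y : (Fin w → Fin d) → Bool,
              leafW d w ρ y * ((fun _ => (1:ℝ)) y *
                cvK d w m ρ (List.replicate (a-1) (fun _ => (1:ℝ))
                  ++ blockSum d w :: (List.replicate (b-a-1) (fun _ => (1:ℝ))
                    ++ blockSum d w :: List.replicate (n' - 1 - (b-1)) (fun _ => (1:ℝ)))) y)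
              = leafW d w ρ y *
                cvK d w m ρ (List.replicate (a-1) (fun _ => (1:ℝ))
                  ++ blockSum d w :: (List.replicate (b-a-1) (fun _ => (1:ℝ))
                    ++ blockSum d w :: List.replicate (n' - 1 - (b-1)) (fun _ => (1:ℝ)))) y :=
            fun y => by ring
          rw [Finset.sum_congr rfl fun y _ => h1 y,
            front_rep hd hm hρ (a-1) _, front hd hm hρ _ _]
          have hfin : ∀ y : (Fin w → Fin d) → Bool,
              leafW d w ρ y * (blockSum d w y *
                cvK d w m ρ (List.replicate (b-a-1) (fun _ => (1:ℝ))
                  ++ blockSum d w :: List.replicate (n' - 1 - (b-1)) (fun _ => (1:ℝ))) y)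
              = ((alphaAR d m ρ * qIsing d w ρ)^(b-a-1) * (alphaAR d m ρ * ((d:ℝ)^w * ρ^w)))
                  * (leafW d w ρ y * (blockSum d w y * rootPostMean d w ρ y)) := by
            intro y
            rw [cvK_main hd hm hρ (n' - 1 - (b-1)) (b-a-1) y]
            ring
          rw [Finset.sum_congr rfl fun y _ => hfin y, ← Finset.mul_sum,
            sum_leafW_block_post hρ, hpow]
          ring

-- MORE HERE
end ARP

end

/-- In the autoregressive Ising broadcast process with context depth `w`
on `T(d,h)`, the block sums satisfy `E[Z_a Z_b] = (dρ)^{2w} α (α q_w)^{b-a-1}` for `a < b`. -/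
theorem statement12 (d h w : ℕ) (hd : 2 ≤ d) (hw : w ≤ h) (ρ : ℝ)
    (hρ : ρ ∈ Set.Icc (0 : ℝ) 1) :
    ∀ a b : Fin (d ^ (h - w)), a < b →
      arExp d w (h - w) (d ^ (h - w)) ρ
          (fun Y => blockSum d w (Y a) * blockSum d w (Y b)) =
        ((d : ℝ) * ρ) ^ (2 * w) * alphaAR d (h - w) ρ *
          (alphaAR d (h - w) ρ * qIsing d w ρ) ^ (b.val - a.val - 1) := by
  intro a b hab
  have hm : 1 ≤ h - w := by
    by_contra hm
    push_neg at hm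
    have h0 : h - w = 0 := by omega
    have h1 : d ^ (h - w) = 1 := by rw [h0, pow_zero]
    have hb : (b : ℕ) < 1 := lt_of_lt_of_le b.isLt (le_of_eq h1)
    have hab' : a.val < b.val := hab
    omega
  exact ARP.main_sum d w (h - w) hd hm ρ hρ (d ^ (h - w)) a.val b.val hab b.isLt
end
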